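/- arXiv:2006.15765 — 2 statements merged into one kernel-verified Lean document; each statement's English description precedes it below -/
import Mathlib

section
/- Let m₀ be an index at which κ_i/T_i attains its maximum over i = 1,…,m. If condition (Z) holds, i.e. ∑_{i=1}^m (n²κ_iT_p² − d_i²(1−κ_i)T_i²)/(nT_pT_i) − 2n < 0, and condition (I) holds, i.e. (κ_{m₀}/T_{m₀})·(−nT_p + ∑_{i=1}^m d_iT_i) < ∑_{i=1}^m d_i + d_{m₀}(1−κ_{m₀}) − 3n, then there exist two solutions (β,α_1,…,α_m,c) and (β′,α′_1,…,α′_m,c′) of the system (∗_c) (with all entries positive, where c and c′ are the respective scaling constants) such that (β′,α′_1,…,α′_m) is not a positive scalar multiple of (β,α_1,…,α_m). -/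
/-!
Normalise `β = 1`. For `c` above the threshold `cₘ = max κᵢ/(4Tᵢ)`, the `𝔨ᵢ`-equations determine
`αᵢ(c) = √((4cTᵢ - κᵢ)/(1 - κᵢ))`, and the `𝔭`-equation becomes `F(c) = 0` for the continuous
function `F(c) = ∑ dᵢ(1 - κᵢ)αᵢ(c) - 2ncTₚ + n`. Condition (I) gives `F(cₘ) < 0`. At the least
`c₀` with `αᵢ(c₀) ≥ dᵢTᵢ/(nTₚ)` for all `i` one has `∑ dᵢTᵢ/αᵢ(c₀) ≥ nTₚ`, and condition (Z)
then gives `F(c₀) > 0`. Since `αᵢ(c) = O(√c)`, `F(c) < 0` for large `c`, so the intermediate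
value theorem yields roots `c₁ < c₀ < c₂`. Both solutions have `β = 1`, so they could only be
proportional if they were equal, and `αᵢ` is injective in `c`.
-/

open Finset

noncomputable section

variable {ι : Type*}

/-- The solution `αᵢ` of the `𝔨ᵢ`-equation of `(∗_c)` with `β = 1`. -/
def alphaSol (κ T : ι → ℝ) (c : ℝ) (i : ι) : ℝ :=
  √((4 * c * T i - κ i) / (1 - κ i))

/-- `2n` times the defect in the `𝔭`-equation of `(∗_c)` at `β = 1`, `α = alphaSol κ T c`. -/
def pDefect [Fintype ι] (d κ T : ι → ℝ) (n Tp c : ℝ) : ℝ :=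
  ∑ i, d i * (1 - κ i) * alphaSol κ T c i - 2 * n * c * Tp + n

def IsPosSolution [Fintype ι] (d κ T : ι → ℝ) (n Tp β c : ℝ) (α : ι → ℝ) : Prop :=
  0 < β ∧ 0 < c ∧ (∀ i, 0 < α i) ∧
    (∀ i, (1/4) * ((α i / β)^2 * (1 - κ i) + κ i) = c * T i) ∧
    ∑ i, (α i / (2*β) + 1) * (d i * (1 - κ i)) / n = c * Tp

section alphaSol

variable {d κ T : ι → ℝ} {c c' : ℝ} {i : ι}

lemma one_sub_mul_alphaSol_sq (hκ : κ i < 1) (hc : κ i ≤ 4 * c * T i) :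
    (1 - κ i) * alphaSol κ T c i ^ 2 = 4 * c * T i - κ i := by
  rw [alphaSol, Real.sq_sqrt (div_nonneg (sub_nonneg.2 hc) (sub_pos.2 hκ).le),
    mul_div_cancel₀ _ (sub_pos.2 hκ).ne']

lemma alphaSol_pos (hκ : κ i < 1) (hc : κ i < 4 * c * T i) : 0 < alphaSol κ T c i :=
  Real.sqrt_pos.2 (div_pos (sub_pos.2 hc) (sub_pos.2 hκ))

lemma eq_of_alphaSol_eq (hκ : κ i < 1) (hT : 0 < T i) (hc : κ i ≤ 4 * c * T i)
    (hc' : κ i ≤ 4 * c' * T i) (h : alphaSol κ T c i = alphaSol κ T c' i) : c = c' := by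
  have hsq := one_sub_mul_alphaSol_sq hκ hc
  rw [h, one_sub_mul_alphaSol_sq hκ hc'] at hsq
  exact mul_right_cancel₀ hT.ne' (by linarith)

lemma le_four_mul_of_le_max {m₀ : ι} (hT : ∀ i, 0 < T i)
    (hm₀ : ∀ i, κ i / T i ≤ κ m₀ / T m₀) (hc : κ m₀ / T m₀ / 4 ≤ c) (i : ι) :
    κ i ≤ 4 * c * T i :=
  (div_le_iff₀ (hT i)).1 ((hm₀ i).trans (by linarith))

lemma lt_four_mul_of_le_max {m₀ : ι} (hT : ∀ i, 0 < T i)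
    (hm₀ : ∀ i, κ i / T i ≤ κ m₀ / T m₀) (hc : κ m₀ / T m₀ / 4 < c) (i : ι) :
    κ i < 4 * c * T i :=
  (div_lt_iff₀ (hT i)).1 ((hm₀ i).trans_lt (by linarith))

/-- AM-GM `2λx ≤ λ² + x²`, with `(1 - κᵢ)αᵢ² = 4cTᵢ - κᵢ`. -/
lemma two_mul_mul_alphaSol_le (l : ℝ) (hd : 0 ≤ d i) (hκ0 : 0 ≤ κ i) (hκ1 : κ i < 1)
    (hc : κ i ≤ 4 * c * T i) :
    2 * l * (d i * (1 - κ i) * alphaSol κ T c i) ≤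
      d i * (1 - κ i) * l ^ 2 + 4 * c * (d i * T i) := by
  have hsq := one_sub_mul_alphaSol_sq hκ1 hc
  nlinarith [mul_nonneg (mul_nonneg hd (sub_pos.2 hκ1).le) (sq_nonneg (l - alphaSol κ T c i)),
    mul_nonneg hd hκ0]

/-- `2c·dᵢTᵢ/αᵢ = dᵢ(1 - κᵢ)αᵢ/2 + dᵢκᵢ/(2αᵢ)`, and the difference with `dᵢ(1 - κᵢ)αᵢ` is
increasing in `αᵢ`. -/
lemma le_mul_alphaSol_sub {w : ℝ} (hd : 0 ≤ d i) (hκ0 : 0 ≤ κ i) (hκ1 : κ i < 1)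
    (hc : κ i ≤ 4 * c * T i) (hw : 0 < w) (hwα : w ≤ alphaSol κ T c i) :
    d i * (1 - κ i) * w / 2 - d i * κ i / (2 * w) ≤
      d i * (1 - κ i) * alphaSol κ T c i - 2 * c * (d i * T i / alphaSol κ T c i) := by
  set x := alphaSol κ T c i
  have hx : 0 < x := hw.trans_le hwα
  have hsq := one_sub_mul_alphaSol_sq hκ1 hc
  have hsplit : 2 * c * (d i * T i / x) = d i * (1 - κ i) * x / 2 + d i * κ i / (2 * x) := by
    field_simp
    linear_combination (-(d i)) * hsq
  have h₁ : d i * (1 - κ i) * w / 2 ≤ d i * (1 - κ i) * x / 2 := by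
    have := mul_nonneg hd (sub_pos.2 hκ1).le
    gcongr
  have h₂ : d i * κ i / (2 * x) ≤ d i * κ i / (2 * w) := by
    have := mul_nonneg hd hκ0
    gcongr
  linarith

lemma exists_le_alphaSol_eq [Finite ι] [Nonempty ι] (hκ1 : ∀ i, κ i < 1) (hT : ∀ i, 0 < T i)
    {w : ι → ℝ} (hw : ∀ i, 0 < w i) :
    ∃ c, (∀ i, κ i < 4 * c * T i) ∧ (∀ i, w i ≤ alphaSol κ T c i) ∧
      ∃ j, alphaSol κ T c j = w j := by
  obtain ⟨j, hj⟩ := Finite.exists_max fun i => (κ i + (1 - κ i) * w i ^ 2) / (4 * T i)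
  set c := (κ j + (1 - κ j) * w j ^ 2) / (4 * T j)
  have hle : ∀ i, κ i + (1 - κ i) * w i ^ 2 ≤ 4 * c * T i := fun i => by
    have := (div_le_iff₀ (by linarith [hT i])).1 (hj i)
    linarith
  refine ⟨c, fun i => ?_, fun i => ?_, j, ?_⟩
  · linarith [hle i, mul_pos (sub_pos.2 (hκ1 i)) (pow_pos (hw i) 2)]
  · rw [alphaSol, Real.le_sqrt' (hw i), le_div_iff₀ (sub_pos.2 (hκ1 i))]
    linarith [hle i]
  · have : 4 * c * T j - κ j = (1 - κ j) * w j ^ 2 := by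
      simp only [c]
      field_simp [(hT j).ne']
      ring
    rw [alphaSol, this, mul_div_cancel_left₀ _ (sub_pos.2 (hκ1 j)).ne', Real.sqrt_sq (hw j).le]

end alphaSol

section defect

variable [Fintype ι] {d κ T : ι → ℝ} {n Tp c : ℝ}

lemma continuous_pDefect : Continuous (pDefect d κ T n Tp) := by
  unfold pDefect alphaSol
  fun_prop

lemma pDefect_neg_of_threshold (hd : ∀ i, 0 ≤ d i) (hκ1 : ∀ i, κ i < 1)
    (hn : n = 2 * ∑ i, d i * (1 - κ i)) (hT : ∀ i, 0 < T i) {m₀ : ι}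
    (hm₀ : ∀ i, κ i / T i ≤ κ m₀ / T m₀)
    (hI : κ m₀ / T m₀ * (-(n * Tp) + ∑ i, d i * T i) < (∑ i, d i) + d m₀ * (1 - κ m₀) - 3 * n) :
    pDefect d κ T n Tp (κ m₀ / T m₀ / 4) < 0 := by
  set q := κ m₀ / T m₀
  set x := alphaSol κ T (q / 4)
  have hadm : ∀ i, κ i ≤ 4 * (q / 4) * T i :=
    le_four_mul_of_le_max hT hm₀ le_rfl
  have hx₀ : x m₀ = 0 := by
    have : 4 * (q / 4) * T m₀ - κ m₀ = 0 := by
      simp only [q]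
      field_simp [(hT m₀).ne']
      ring
    simp only [x, alphaSol, this, zero_div, Real.sqrt_zero]
  -- `2√X = 1 + X - (1 - √X)²`, and the square is `1` at `m₀`
  have hterm : ∀ i, 2 * (d i * (1 - κ i) * x i) =
      d i * (1 - κ i) + (q * (d i * T i) - d i * κ i) - d i * (1 - κ i) * (1 - x i) ^ 2 :=
    fun i => by linear_combination d i * one_sub_mul_alphaSol_sq (hκ1 i) (hadm i)
  have hsum : 2 * ∑ i, d i * (1 - κ i) * x i =
      ∑ i, d i * (1 - κ i) + (q * ∑ i, d i * T i - ∑ i, d i * κ i) -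
        ∑ i, d i * (1 - κ i) * (1 - x i) ^ 2 := by
    rw [mul_sum, mul_sum, ← sum_sub_distrib, ← sum_add_distrib, ← sum_sub_distrib]
    exact sum_congr rfl fun i _ => hterm i
  have hm₀term : d m₀ * (1 - κ m₀) ≤ ∑ i, d i * (1 - κ i) * (1 - x i) ^ 2 := by
    simpa [hx₀] using single_le_sum (fun i _ => mul_nonneg (mul_nonneg (hd i)
      (sub_pos.2 (hκ1 i)).le) (sq_nonneg (1 - x i))) (mem_univ m₀)
  have hdκ : ∑ i, d i * (1 - κ i) = ∑ i, d i - ∑ i, d i * κ i := by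
    simp only [mul_one_sub, sum_sub_distrib]
  unfold pDefect
  linarith

lemma exists_pDefect_pos [Nonempty ι] (hd : ∀ i, 0 < d i) (hκ0 : ∀ i, 0 ≤ κ i)
    (hκ1 : ∀ i, κ i < 1) (hn0 : 0 < n) (hTp : 0 < Tp) (hT : ∀ i, 0 < T i)
    (hZ : ∑ i, (n^2 * κ i * Tp^2 - d i^2 * (1 - κ i) * (T i)^2) / (n * Tp * T i) - 2 * n < 0) :
    ∃ c, (∀ i, κ i < 4 * c * T i) ∧ 0 < pDefect d κ T n Tp c := by
  have hw : ∀ i, 0 < d i * T i / (n * Tp) := fun i => by have := hd i; have := hT i; positivity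
  obtain ⟨c, hadm, hle, j, hj⟩ := exists_le_alphaSol_eq hκ1 hT hw
  refine ⟨c, hadm, ?_⟩
  set x := alphaSol κ T c
  have hc : 0 ≤ c := by nlinarith [hadm j, hκ0 j, hT j]
  have hcrit : n * Tp ≤ ∑ i, d i * T i / x i := calc
    n * Tp = d j * T j / x j := by
      rw [hj]
      field_simp [(hd j).ne', (hT j).ne']
    _ ≤ ∑ i, d i * T i / x i := single_le_sum (fun i _ =>
      (div_pos (mul_pos (hd i) (hT i)) ((hw i).trans_le (hle i))).le) (mem_univ j)
  have hterm : ∀ i, -((n^2 * κ i * Tp^2 - d i^2 * (1 - κ i) * (T i)^2) / (n * Tp * T i)) / 2 ≤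
      d i * (1 - κ i) * x i - 2 * c * (d i * T i / x i) := fun i => by
    convert le_mul_alphaSol_sub (hd i).le (hκ0 i) (hκ1 i) (hadm i).le (hw i) (hle i) using 1
    field_simp [(hd i).ne', (hT i).ne']
    ring
  have hsum := sum_le_sum fun i (_ : i ∈ univ) => hterm i
  rw [sum_sub_distrib, ← mul_sum, ← sum_div, sum_neg_distrib] at hsum
  unfold pDefect
  linarith [mul_le_mul_of_nonneg_left hcrit hc]

lemma pDefect_le (hd : ∀ i, 0 ≤ d i) (hκ0 : ∀ i, 0 ≤ κ i) (hκ1 : ∀ i, κ i < 1)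
    (hn : n = 2 * ∑ i, d i * (1 - κ i)) (hn0 : 0 < n) (hTp : 0 < Tp)
    (hS : 0 < ∑ i, d i * T i) (hc : ∀ i, κ i ≤ 4 * c * T i) :
    pDefect d κ T n Tp c ≤ (∑ i, d i * T i) / (2 * Tp) + n - c * n * Tp := by
  set S := ∑ i, d i * T i
  set l := 2 * S / (n * Tp)
  have hl : 0 < l := by positivity
  have hamgm : 2 * l * ∑ i, d i * (1 - κ i) * alphaSol κ T c i ≤ n / 2 * l ^ 2 + 4 * c * S := calc
    _ = ∑ i, 2 * l * (d i * (1 - κ i) * alphaSol κ T c i) := mul_sum _ _ _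
    _ ≤ ∑ i, (d i * (1 - κ i) * l ^ 2 + 4 * c * (d i * T i)) :=
      sum_le_sum fun i _ => two_mul_mul_alphaSol_le l (hd i) (hκ0 i) (hκ1 i) (hc i)
    _ = n / 2 * l ^ 2 + 4 * c * S := by rw [sum_add_distrib, ← sum_mul, ← mul_sum, hn]; ring
  have hrhs : n / 2 * l ^ 2 + 4 * c * S = 2 * l * (S / (2 * Tp) + c * n * Tp) := by
    simp only [l]
    field_simp
    ring
  have := le_of_mul_le_mul_left (hamgm.trans_eq hrhs) (by positivity)
  unfold pDefect
  linarith

lemma exists_gt_pDefect_neg [Nonempty ι] (hd : ∀ i, 0 < d i) (hκ0 : ∀ i, 0 ≤ κ i)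
    (hκ1 : ∀ i, κ i < 1) (hn : n = 2 * ∑ i, d i * (1 - κ i)) (hn0 : 0 < n) (hTp : 0 < Tp)
    (hT : ∀ i, 0 < T i) {c₀ : ℝ} (hc₀ : ∀ i, κ i ≤ 4 * c₀ * T i) :
    ∃ c, c₀ < c ∧ pDefect d κ T n Tp c < 0 := by
  have hS : 0 < ∑ i, d i * T i := sum_pos (fun i _ => mul_pos (hd i) (hT i)) univ_nonempty
  set C := ((∑ i, d i * T i) / (2 * Tp) + n) / (n * Tp)
  have hc₀c : c₀ < max c₀ C + 1 := by linarith [le_max_left c₀ C]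
  have hlarge : (∑ i, d i * T i) / (2 * Tp) + n < (max c₀ C + 1) * n * Tp := by
    rw [mul_assoc, ← div_lt_iff₀ (by positivity)]
    linarith [le_max_right c₀ C]
  have hc : ∀ i, κ i ≤ 4 * (max c₀ C + 1) * T i := fun i => by nlinarith [hc₀ i, hT i]
  refine ⟨max c₀ C + 1, hc₀c, ?_⟩
  linarith [pDefect_le (fun i => (hd i).le) hκ0 hκ1 hn hn0 hTp hS hc]

lemma isPosSolution_alphaSol (hκ1 : ∀ i, κ i < 1) (hn : n = 2 * ∑ i, d i * (1 - κ i))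
    (hn0 : 0 < n) (hc0 : 0 < c) (hc : ∀ i, κ i < 4 * c * T i)
    (h : pDefect d κ T n Tp c = 0) : IsPosSolution d κ T n Tp 1 c (alphaSol κ T c) := by
  refine ⟨one_pos, hc0, fun i => alphaSol_pos (hκ1 i) (hc i), fun i => ?_, ?_⟩
  · rw [div_one]
    linear_combination (1/4) * one_sub_mul_alphaSol_sq (hκ1 i) (hc i).le
  · have : ∑ i, (alphaSol κ T c i / (2 * 1) + 1) * (d i * (1 - κ i)) =
        (∑ i, d i * (1 - κ i) * alphaSol κ T c i) / 2 + ∑ i, d i * (1 - κ i) := by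
      rw [sum_div, ← sum_add_distrib]
      exact sum_congr rfl fun i _ => by ring
    rw [← sum_div, div_eq_iff hn0.ne', this]
    unfold pDefect at h
    linarith

end defect

end

theorem stmt_18_general (m : ℕ) (d : Fin m → ℕ) (hd : ∀ i, 0 < d i)
    (κ : Fin m → ℝ) (hκ0 : ∀ i, 0 ≤ κ i) (hκ1 : ∀ i, κ i < 1)
    (n : ℝ) (hn : n = 2 * ∑ i, (d i : ℝ) * (1 - κ i))
    (Tp : ℝ) (hTp : 0 < Tp) (T : Fin m → ℝ) (hT : ∀ i, 0 < T i)
    (m₀ : Fin m) (hm₀ : ∀ i, κ i / T i ≤ κ m₀ / T m₀)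
    (hZ : ∑ i, (n^2 * κ i * Tp^2 - (d i : ℝ)^2 * (1 - κ i) * (T i)^2) / (n * Tp * T i)
        - 2 * n < 0)
    (hI : (κ m₀ / T m₀) * (-(n * Tp) + ∑ i, (d i : ℝ) * T i)
        < (∑ i, (d i : ℝ)) + (d m₀ : ℝ) * (1 - κ m₀) - 3 * n) :
    ∃ β β' c c' : ℝ, ∃ α α' : Fin m → ℝ,
      0 < β ∧ 0 < β' ∧ 0 < c ∧ 0 < c' ∧ (∀ i, 0 < α i) ∧ (∀ i, 0 < α' i) ∧
      (∀ i, (1/4) * ((α i / β)^2 * (1 - κ i) + κ i) = c * T i) ∧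
      (∑ i, (α i / (2*β) + 1) * ((d i : ℝ) * (1 - κ i)) / n = c * Tp) ∧
      (∀ i, (1/4) * ((α' i / β')^2 * (1 - κ i) + κ i) = c' * T i) ∧
      (∑ i, (α' i / (2*β') + 1) * ((d i : ℝ) * (1 - κ i)) / n = c' * Tp) ∧
      ¬ ∃ τ : ℝ, 0 < τ ∧ β' = τ * β ∧ ∀ i, α' i = τ * α i := by
  have : Nonempty (Fin m) := ⟨m₀⟩
  have hdR : ∀ i, (0 : ℝ) < d i := fun i => Nat.cast_pos.2 (hd i)
  have hn0 : 0 < n := hn ▸ mul_pos two_pos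
    (sum_pos (fun i _ => mul_pos (hdR i) (sub_pos.2 (hκ1 i))) univ_nonempty)
  set cₘ := κ m₀ / T m₀ / 4
  have hcₘ : 0 ≤ cₘ := div_nonneg (div_nonneg (hκ0 m₀) (hT m₀).le) zero_le_four
  have hadm : ∀ c, cₘ < c → ∀ i, κ i < 4 * c * T i := fun c => lt_four_mul_of_le_max hT hm₀
  have hFₘ := pDefect_neg_of_threshold (fun i => (hdR i).le) hκ1 hn hT hm₀ hI
  obtain ⟨c₀, hc₀, hF₀⟩ := exists_pDefect_pos hdR hκ0 hκ1 hn0 hTp hT hZ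
  obtain ⟨c₃, hc₀₃, hF₃⟩ :=
    exists_gt_pDefect_neg hdR hκ0 hκ1 hn hn0 hTp hT fun i => (hc₀ i).le
  have hcₘ₀ : cₘ < c₀ :=
    (div_lt_iff₀ four_pos).2 ((div_lt_iff₀ (hT m₀)).2 (by linarith [hc₀ m₀]))
  obtain ⟨c₁, ⟨hc₁ₘ, hc₁₀⟩, hF₁⟩ :=
    intermediate_value_Ioo hcₘ₀.le continuous_pDefect.continuousOn ⟨hFₘ, hF₀⟩
  obtain ⟨c₂, ⟨hc₂₀, -⟩, hF₂⟩ :=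
    intermediate_value_Ioo' hc₀₃.le continuous_pDefect.continuousOn ⟨hF₃, hF₀⟩
  obtain ⟨hβ₁, hc₁, hα₁, hk₁, hp₁⟩ :=
    isPosSolution_alphaSol hκ1 hn hn0 (by linarith) (hadm c₁ hc₁ₘ) hF₁
  obtain ⟨hβ₂, hc₂, hα₂, hk₂, hp₂⟩ :=
    isPosSolution_alphaSol hκ1 hn hn0 (by linarith) (hadm c₂ (by linarith)) hF₂
  refine ⟨1, 1, c₁, c₂, _, _, hβ₁, hβ₂, hc₁, hc₂, hα₁, hα₂, hk₁, hp₁, hk₂, hp₂, ?_⟩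
  rintro ⟨τ, -, hτ, hα⟩
  obtain rfl : τ = 1 := by linarith
  refine (hc₁₀.trans hc₂₀).ne (eq_of_alphaSol_eq (hκ1 m₀) (hT m₀) (hadm c₁ hc₁ₘ m₀).le
    (hadm c₂ (by linarith) m₀).le ?_)
  simpa using (hα m₀).symm

/-- Theorem 5.10 (2): under conditions (Z) and (I) there exist two positive solutions of the
system (∗_c) whose metric parts are not proportional. -/
theorem stmt_18 (m : ℕ) (hm : 1 ≤ m) (d : Fin m → ℕ) (hd : ∀ i, 0 < d i)
    (κ : Fin m → ℝ) (hκ0 : ∀ i, 0 ≤ κ i) (hκ1 : ∀ i, κ i < 1)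
    (n : ℝ) (hn : n = 2 * ∑ i, (d i : ℝ) * (1 - κ i))
    (Tp : ℝ) (hTp : 0 < Tp) (T : Fin m → ℝ) (hT : ∀ i, 0 < T i)
    (m₀ : Fin m) (hm₀ : ∀ i, κ i / T i ≤ κ m₀ / T m₀)
    (hZ : ∑ i, (n^2 * κ i * Tp^2 - (d i : ℝ)^2 * (1 - κ i) * (T i)^2) / (n * Tp * T i)
        - 2 * n < 0)
    (hI : (κ m₀ / T m₀) * (-(n * Tp) + ∑ i, (d i : ℝ) * T i)
        < (∑ i, (d i : ℝ)) + (d m₀ : ℝ) * (1 - κ m₀) - 3 * n) :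
    ∃ β β' c c' : ℝ, ∃ α α' : Fin m → ℝ,
      0 < β ∧ 0 < β' ∧ 0 < c ∧ 0 < c' ∧ (∀ i, 0 < α i) ∧ (∀ i, 0 < α' i) ∧
      (∀ i, (1/4) * ((α i / β)^2 * (1 - κ i) + κ i) = c * T i) ∧
      (∑ i, (α i / (2*β) + 1) * ((d i : ℝ) * (1 - κ i)) / n = c * Tp) ∧
      (∀ i, (1/4) * ((α' i / β')^2 * (1 - κ i) + κ i) = c' * T i) ∧
      (∑ i, (α' i / (2*β') + 1) * ((d i : ℝ) * (1 - κ i)) / n = c' * Tp) ∧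
      ¬ ∃ τ : ℝ, 0 < τ ∧ β' = τ * β ∧ ∀ i, α' i = τ * α i :=
  stmt_18_general m d hd κ hκ0 hκ1 n hn Tp hTp T hT m₀ hm₀ hZ hI
end

section
/- Consider the set 𝒮 of pairs (x,c) of positive real numbers satisfying κ_1(1 − x²) + x² = 4cT_1 and 2 + x = 4cT_p. Then: (1) if 2nT_p(2T_1 − κ_1T_p) < −d_1T_1², then 𝒮 is empty; (2) if 2nT_p(2T_1 − κ_1T_p) = −d_1T_1² or 2T_1 − κ_1T_p ≥ 0, then 𝒮 contains exactly one element; (3) if −d_1T_1² < 2nT_p(2T_1 − κ_1T_p) < 0, then 𝒮 contains exactly two elements. -/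
/-!
Eliminating `c = (2 + x) / (4 T_p)` turns the system into the quadratic equation
`(1 - κ₁) T_p x² - T₁ x + (κ₁ T_p - 2 T₁) = 0` in `x > 0`, whose discriminant `D` satisfies
`d₁ D = 2 n T_p (2 T₁ - κ₁ T_p) + d₁ T₁²`. The leading coefficient is positive and the sum of
the roots is positive, so there is no positive root for `D < 0`, one for `D = 0`, one when the
constant term is `≤ 0` (the roots have product `≤ 0`), and two when `D > 0` and the constant
term is positive.
-/

open Set

def positiveRoots (a b c : ℝ) : Set ℝ := {x | 0 < x ∧ a * (x * x) + b * x + c = 0}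

section positiveRoots

variable {a b c : ℝ}

theorem positiveRoots_eq_empty (h : discrim a b c < 0) : positiveRoots a b c = ∅ :=
  eq_empty_of_forall_notMem fun _ hx =>
    (discrim_eq_sq_of_quadratic_eq_zero hx.2 ▸ h).not_ge (sq_nonneg _)

theorem mem_positiveRoots_iff (ha : a ≠ 0) (hD : 0 ≤ discrim a b c) {x : ℝ} :
    x ∈ positiveRoots a b c ↔ 0 < x ∧
      (x = (-b + √(discrim a b c)) / (2 * a) ∨ x = (-b - √(discrim a b c)) / (2 * a)) :=
  and_congr_right fun _ => quadratic_eq_zero_iff ha (Real.mul_self_sqrt hD).symm x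

theorem positiveRoots_eq_singleton (ha : 0 < a) (hb : b < 0) (h : discrim a b c = 0 ∨ c ≤ 0) :
    positiveRoots a b c = {(-b + √(discrim a b c)) / (2 * a)} := by
  have hD : 0 ≤ discrim a b c := by
    rcases h with h | h
    · exact h.ge
    · rw [discrim]; nlinarith
  have hplus : 0 < (-b + √(discrim a b c)) / (2 * a) := by
    have := Real.sqrt_nonneg (discrim a b c)
    exact div_pos (by linarith) (by positivity)
  ext x
  rw [mem_positiveRoots_iff ha.ne' hD, mem_singleton_iff]
  constructor
  · rintro ⟨hx, rfl | rfl⟩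
    · rfl
    rcases h with h | h
    · rw [h, Real.sqrt_zero, add_zero, sub_zero]
    -- for `c ≤ 0` we have `D ≥ b²`, so the smaller root is `≤ 0`
    have : -b ≤ √(discrim a b c) := (Real.le_sqrt' (by linarith)).2 (by rw [discrim]; nlinarith)
    exact absurd hx (div_nonpos_of_nonpos_of_nonneg (by linarith) (by positivity)).not_gt
  · rintro rfl
    exact ⟨hplus, Or.inl rfl⟩

theorem positiveRoots_eq_pair (ha : 0 < a) (hb : b < 0) (hc : 0 < c) (hD : 0 ≤ discrim a b c) :
    positiveRoots a b c =
      {(-b + √(discrim a b c)) / (2 * a), (-b - √(discrim a b c)) / (2 * a)} := by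
  have hsqrt : √(discrim a b c) < -b :=
    (Real.sqrt_lt' (by linarith)).2 (by rw [discrim]; nlinarith)
  have := Real.sqrt_nonneg (discrim a b c)
  ext x
  rw [mem_positiveRoots_iff ha.ne' hD, mem_insert_iff, mem_singleton_iff]
  refine ⟨And.right, fun hx => ⟨?_, hx⟩⟩
  rcases hx with rfl | rfl <;> exact div_pos (by linarith) (by positivity)

theorem exists_ne_positiveRoots_eq_pair (ha : 0 < a) (hb : b < 0) (hc : 0 < c)
    (hD : 0 < discrim a b c) : ∃ x y, x ≠ y ∧ positiveRoots a b c = {x, y} := by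
  refine ⟨_, _, fun h => ?_, positiveRoots_eq_pair ha hb hc hD.le⟩
  have := (div_left_inj' (by positivity : 2 * a ≠ 0)).1 h
  linarith [Real.sqrt_pos.2 hD]

end positiveRoots

theorem prescribed_ricci_iff {κ Tp T₁ x c : ℝ} (hTp : 0 < Tp) :
    (0 < x ∧ 0 < c ∧ κ * (1 - x ^ 2) + x ^ 2 = 4 * c * T₁ ∧ 2 + x = 4 * c * Tp) ↔
      x ∈ positiveRoots ((1 - κ) * Tp) (-T₁) (κ * Tp - 2 * T₁) ∧ (2 + x) / (4 * Tp) = c := by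
  rw [div_eq_iff (by positivity)]
  constructor
  · rintro ⟨hx, -, h₁, h₂⟩
    refine ⟨⟨hx, ?_⟩, by linarith⟩
    linear_combination Tp * h₁ - T₁ * h₂
  · rintro ⟨⟨hx, hq⟩, hc⟩
    refine ⟨hx, by nlinarith, mul_left_cancel₀ hTp.ne' ?_, by linarith⟩
    linear_combination hq + T₁ * hc

theorem stmt_19_general (d₁ : ℕ) (hd₁ : 0 < d₁) (κ₁ : ℝ) (hκ₁1 : κ₁ < 1)
    (n : ℝ) (hn : n = 2 * (d₁ : ℝ) * (1 - κ₁))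
    (Tp T₁ : ℝ) (hTp : 0 < Tp) (hT₁ : 0 < T₁)
    (𝒮 : Set (ℝ × ℝ))
    (h𝒮 : 𝒮 = {z | 0 < z.1 ∧ 0 < z.2 ∧
        κ₁ * (1 - z.1^2) + z.1^2 = 4 * z.2 * T₁ ∧ 2 + z.1 = 4 * z.2 * Tp}) :
    (2 * n * Tp * (2 * T₁ - κ₁ * Tp) < -((d₁ : ℝ) * T₁^2) → 𝒮 = ∅) ∧
    ((2 * n * Tp * (2 * T₁ - κ₁ * Tp) = -((d₁ : ℝ) * T₁^2) ∨ 0 ≤ 2 * T₁ - κ₁ * Tp) →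
      ∃! z : ℝ × ℝ, z ∈ 𝒮) ∧
    ((-((d₁ : ℝ) * T₁^2) < 2 * n * Tp * (2 * T₁ - κ₁ * Tp) ∧
        2 * n * Tp * (2 * T₁ - κ₁ * Tp) < 0) →
      ∃ z w : ℝ × ℝ, z ∈ 𝒮 ∧ w ∈ 𝒮 ∧ z ≠ w ∧ ∀ u ∈ 𝒮, u = z ∨ u = w) := by
  have hd : (0 : ℝ) < d₁ := by exact_mod_cast hd₁
  have ha : 0 < (1 - κ₁) * Tp := mul_pos (by linarith) hTp
  have hS : 𝒮 = (positiveRoots ((1 - κ₁) * Tp) (-T₁) (κ₁ * Tp - 2 * T₁)).graphOn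
      fun x => (2 + x) / (4 * Tp) := by
    ext z
    rw [h𝒮, mem_graphOn]
    exact prescribed_ricci_iff hTp
  have hdiscrim : 2 * n * Tp * (2 * T₁ - κ₁ * Tp) + d₁ * T₁ ^ 2 =
      d₁ * discrim ((1 - κ₁) * Tp) (-T₁) (κ₁ * Tp - 2 * T₁) := by
    rw [hn, discrim]; ring
  refine ⟨fun h => ?_, fun h => ?_, fun ⟨h₁, h₂⟩ => ?_⟩
  · rw [hS, graphOn_eq_empty]
    exact positiveRoots_eq_empty (neg_of_mul_neg_right (by linarith) hd.le)
  · rw [hS, positiveRoots_eq_singleton ha (neg_neg_of_pos hT₁) ?_, graphOn_singleton]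
    · exact ⟨_, rfl, fun _ h => h⟩
    refine h.imp (fun h => ?_) (fun h => by linarith)
    exact (mul_eq_zero.1 (by linarith)).resolve_left hd.ne'
  · have hc : 0 < κ₁ * Tp - 2 * T₁ := by
      have : 0 < 2 * n * Tp := by rw [hn]; nlinarith
      linarith [neg_of_mul_neg_right h₂ this.le]
    obtain ⟨x, y, hxy, hxy'⟩ := exists_ne_positiveRoots_eq_pair ha (neg_neg_of_pos hT₁) hc
      (pos_of_mul_pos_right (by linarith) hd.le)
    rw [hS, hxy', graphOn_insert, graphOn_singleton]
    exact ⟨_, _, Or.inl rfl, Or.inr rfl, fun h => hxy (congrArg Prod.fst h), fun _ h => h⟩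

/-- Proposition 6.1: count of solutions `(x, c)` (with `x = α₁/β`) of the system equivalent to
`Ric(g) = cT` when the maximal compact subgroup `K` is simple. -/
theorem stmt_19 (d₁ : ℕ) (hd₁ : 0 < d₁) (κ₁ : ℝ) (hκ₁0 : 0 ≤ κ₁) (hκ₁1 : κ₁ < 1)
    (n : ℝ) (hn : n = 2 * (d₁ : ℝ) * (1 - κ₁))
    (Tp T₁ : ℝ) (hTp : 0 < Tp) (hT₁ : 0 < T₁)
    (𝒮 : Set (ℝ × ℝ))
    (h𝒮 : 𝒮 = {z | 0 < z.1 ∧ 0 < z.2 ∧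
        κ₁ * (1 - z.1^2) + z.1^2 = 4 * z.2 * T₁ ∧ 2 + z.1 = 4 * z.2 * Tp}) :
    (2 * n * Tp * (2 * T₁ - κ₁ * Tp) < -((d₁ : ℝ) * T₁^2) → 𝒮 = ∅) ∧
    ((2 * n * Tp * (2 * T₁ - κ₁ * Tp) = -((d₁ : ℝ) * T₁^2) ∨ 0 ≤ 2 * T₁ - κ₁ * Tp) →
      ∃! z : ℝ × ℝ, z ∈ 𝒮) ∧
    ((-((d₁ : ℝ) * T₁^2) < 2 * n * Tp * (2 * T₁ - κ₁ * Tp) ∧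
        2 * n * Tp * (2 * T₁ - κ₁ * Tp) < 0) →
      ∃ z w : ℝ × ℝ, z ∈ 𝒮 ∧ w ∈ 𝒮 ∧ z ≠ w ∧ ∀ u ∈ 𝒮, u = z ∨ u = w) :=
  stmt_19_general d₁ hd₁ κ₁ hκ₁1 n hn Tp T₁ hTp hT₁ 𝒮 h𝒮
end
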